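/- For any multiple testing procedure φ, any θ ∈ ℓ0[s] with s ≥ 1, any λ ∈ (0,1), and any ρ > 0, the combined risk is bounded below via the weighted classification loss: 𝔎(θ,φ) ≥ min(λ, ρλ/(1+ρλ)) · P_θ(L_ρ(θ,φ) ≥ λρs). -/

import Mathlib

open MeasureTheory ProbabilityTheory Filter
open scoped Classical ENNReal

noncomputable section

/-- Law of the observation `X = θ + ε` with `ε_i` i.i.d. standard Gaussian `N(0,1)`. -/
def obsLaw {n : ℕ} (θ : Fin n → ℝ) : Measure (Fin n → ℝ) :=
  Measure.pi fun i => gaussianReal (θ i) 1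

/-- Number of rejections of the decision vector `v`. -/
def numRej {n : ℕ} (v : Fin n → Bool) : ℕ :=
  (Finset.univ.filter fun i => v i = true).card

/-- Support of `θ`. -/
def supp {n : ℕ} (θ : Fin n → ℝ) : Finset (Fin n) :=
  Finset.univ.filter fun i => θ i ≠ 0

/-- False discovery proportion. -/
def FDP {n : ℕ} (θ : Fin n → ℝ) (v : Fin n → Bool) : ℝ :=
  ((Finset.univ.filter fun i => θ i = 0 ∧ v i = true).card : ℝ) / max 1 (numRej v : ℝ)

/-- False negative proportion. -/
def FNP {n : ℕ} (θ : Fin n → ℝ) (v : Fin n → Bool) : ℝ :=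
  ((Finset.univ.filter fun i => θ i ≠ 0 ∧ v i = false).card : ℝ) / max 1 ((supp θ).card : ℝ)

/-- False discovery rate. -/
def FDR {n : ℕ} (θ : Fin n → ℝ) (φ : (Fin n → ℝ) → Fin n → Bool) : ℝ :=
  ∫ x, FDP θ (φ x) ∂(obsLaw θ)

/-- False negative rate. -/
def FNR {n : ℕ} (θ : Fin n → ℝ) (φ : (Fin n → ℝ) → Fin n → Bool) : ℝ :=
  ∫ x, FNP θ (φ x) ∂(obsLaw θ)

/-- Combined multiple testing risk `𝔎 = FDR + FNR`. -/
def mtRisk {n : ℕ} (θ : Fin n → ℝ) (φ : (Fin n → ℝ) → Fin n → Bool) : ℝ :=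
  FDR θ φ + FNR θ φ

/-- The class `Θ(a, s)`: exactly `s` nonzero coordinates, all of absolute value at least `a`. -/
def ThetaSet (n : ℕ) (a : ℝ) (s : ℕ) : Set (Fin n → ℝ) :=
  {θ | (supp θ).card = s ∧ ∀ i, θ i ≠ 0 → a ≤ |θ i|}

/-- The class `Θ_b = Θ(√(2 log(n/s)) + b, s)`. -/
def ThetaB (n s : ℕ) (b : ℝ) : Set (Fin n → ℝ) :=
  ThetaSet n (Real.sqrt (2 * Real.log ((n : ℝ) / (s : ℝ))) + b) s

/-- Standard Gaussian upper tail function `Φ̄(b)`. -/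
def Phibar (b : ℝ) : ℝ := (gaussianReal 0 1 (Set.Ioi b)).toReal

/-- Weighted classification loss `L_ρ`. -/
def Lweight {n : ℕ} (ρ : ℝ) (θ : Fin n → ℝ) (v : Fin n → Bool) : ℝ :=
  ((Finset.univ.filter fun i => θ i = 0 ∧ v i = true).card : ℝ) +
    ρ * ((Finset.univ.filter fun i => θ i ≠ 0 ∧ v i = false).card : ℝ)

/-! On the event `lam * ρ * s ≤ L_ρ`, write `V` for the false discoveries and `W` for the missed
signals, so that `V + ρ W ≥ lam ρ s`. Since at most `V + s` hypotheses are rejected,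
`FDP ≥ V / (V + s)` and `FNP ≥ W / s`, and an elementary inequality bounds the sum of these from
below by `min lam (ρ lam / (1 + ρ lam))`. Markov's inequality for the nonnegative `FDP + FNP`
finishes the proof. -/

lemma min_le_div_add_div {s V W lam ρ : ℝ} (hs : 0 < s) (hV : 0 ≤ V) (hW : 0 ≤ W)
    (hlam : 0 < lam) (hρ : 0 < ρ) (h : lam * ρ * s ≤ V + ρ * W) :
    min lam (ρ * lam / (1 + ρ * lam)) ≤ V / (V + s) + W / s := by
  rcases le_or_gt (lam * s) W with hWlarge | hWsmall
  · have : lam ≤ W / s := (le_div_iff₀ hs).2 hWlarge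
    have : 0 ≤ V / (V + s) := by positivity
    linarith [min_le_left lam (ρ * lam / (1 + ρ * lam))]
  · have hk : 0 < 1 + ρ * lam := by positivity
    have hFDP : ρ * (lam * s - W) / ((1 + ρ * lam) * s) ≤ V / (V + s) := by
      rw [div_le_div_iff₀ (by positivity) (by positivity)]
      nlinarith [mul_nonneg (mul_nonneg hρ.le hW) hV, mul_le_mul_of_nonneg_right h hs.le]
    -- the left side plus `W / s` is affine in `W ∈ [0, lam * s]`, with value
    -- `ρ lam / (1 + ρ lam)` at `W = 0` and `lam` at `W = lam * s`
    set t := W / (lam * s)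
    have ht0 : 0 ≤ t := by positivity
    have ht1 : t ≤ 1 := (div_le_one (by positivity)).2 hWsmall.le
    have hcomb : ρ * (lam * s - W) / ((1 + ρ * lam) * s) + W / s =
        (1 - t) * (ρ * lam / (1 + ρ * lam)) + t * lam := by
      simp only [t]; field_simp
    have := min_le_left lam (ρ * lam / (1 + ρ * lam))
    have := min_le_right lam (ρ * lam / (1 + ρ * lam))
    nlinarith

section Proportions

variable {n : ℕ} (θ : Fin n → ℝ) (v : Fin n → Bool)

lemma numRej_le_card_add_card_supp :
    numRej v ≤ (Finset.univ.filter fun i => θ i = 0 ∧ v i = true).card + (supp θ).card := by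
  refine (Finset.card_le_card fun i hi => ?_).trans (Finset.card_union_le _ _)
  by_cases hi0 : θ i = 0 <;> simp_all [supp]

lemma FDP_nonneg : 0 ≤ FDP θ v := by unfold FDP; positivity

lemma FNP_nonneg : 0 ≤ FNP θ v := by unfold FNP; positivity

lemma div_card_add_le_FDP {s : ℕ} (hθ : (supp θ).card ≤ s) (hs : 1 ≤ s) :
    ((Finset.univ.filter fun i => θ i = 0 ∧ v i = true).card : ℝ) /
        ((Finset.univ.filter fun i => θ i = 0 ∧ v i = true).card + s) ≤ FDP θ v := by
  have hrej := numRej_le_card_add_card_supp θ v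
  refine div_le_div_of_nonneg_left (by positivity) (by positivity) (max_le ?_ ?_)
  · have : (1 : ℝ) ≤ s := by exact_mod_cast hs
    linarith [Nat.cast_nonneg (α := ℝ) (Finset.univ.filter fun i => θ i = 0 ∧ v i = true).card]
  · exact_mod_cast hrej.trans (by omega)

lemma div_le_FNP {s : ℕ} (hθ : (supp θ).card ≤ s) (hs : 1 ≤ s) :
    ((Finset.univ.filter fun i => θ i ≠ 0 ∧ v i = false).card : ℝ) / s ≤ FNP θ v :=
  div_le_div_of_nonneg_left (by positivity) (by positivity)
    (max_le (by exact_mod_cast hs) (by exact_mod_cast hθ))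

lemma min_le_FDP_add_FNP_of_le_Lweight {s : ℕ} (hθ : (supp θ).card ≤ s) (hs : 1 ≤ s)
    {lam ρ : ℝ} (hlam : 0 < lam) (hρ : 0 < ρ) (h : lam * ρ * s ≤ Lweight ρ θ v) :
    min lam (ρ * lam / (1 + ρ * lam)) ≤ FDP θ v + FNP θ v :=
  (min_le_div_add_div (by exact_mod_cast hs) (by positivity) (by positivity) hlam hρ h).trans
    (add_le_add (div_card_add_le_FDP θ v hθ hs) (div_le_FNP θ v hθ hs))

end Proportions

instance isProbabilityMeasure_obsLaw {n : ℕ} (θ : Fin n → ℝ) :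
    IsProbabilityMeasure (obsLaw θ) := by
  unfold obsLaw; infer_instance

lemma integrable_comp_of_finite {α β : Type*} [MeasurableSpace α] [MeasurableSpace β] [Finite β]
    [MeasurableSingletonClass β] {μ : Measure α} [IsFiniteMeasure μ] {φ : α → β}
    (hφ : Measurable φ) (g : β → ℝ) : Integrable (g ∘ φ) μ :=
  Integrable.of_finite.comp_measurable hφ

lemma mtRisk_eq_integral {n : ℕ} (θ : Fin n → ℝ) {φ : (Fin n → ℝ) → Fin n → Bool}
    (hφ : Measurable φ) : mtRisk θ φ = ∫ x, FDP θ (φ x) + FNP θ (φ x) ∂obsLaw θ :=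
  (integral_add (integrable_comp_of_finite hφ (FDP θ))
    (integrable_comp_of_finite hφ (FNP θ))).symm

theorem statement_11 {n : ℕ} (s : ℕ) (hs : 1 ≤ s)
    (θ : Fin n → ℝ) (hθ : (supp θ).card ≤ s)
    (φ : (Fin n → ℝ) → (Fin n → Bool)) (hφ : Measurable φ)
    (lam : ℝ) (hlam : lam ∈ Set.Ioo (0 : ℝ) 1) (ρ : ℝ) (hρ : 0 < ρ) :
    min lam (ρ * lam / (1 + ρ * lam)) *
        (obsLaw θ {x | lam * ρ * (s : ℝ) ≤ Lweight ρ θ (φ x)}).toReal ≤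
      mtRisk θ φ := by
  set m := min lam (ρ * lam / (1 + ρ * lam))
  have hm : 0 ≤ m := le_min hlam.1.le (by have := hlam.1; positivity)
  have hsub : {x | lam * ρ * (s : ℝ) ≤ Lweight ρ θ (φ x)} ⊆
      {x | m ≤ FDP θ (φ x) + FNP θ (φ x)} := fun x hx =>
    min_le_FDP_add_FNP_of_le_Lweight θ (φ x) hθ hs hlam.1 hρ hx
  calc m * (obsLaw θ {x | lam * ρ * (s : ℝ) ≤ Lweight ρ θ (φ x)}).toReal
      ≤ m * (obsLaw θ).real {x | m ≤ FDP θ (φ x) + FNP θ (φ x)} :=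
        mul_le_mul_of_nonneg_left (measureReal_mono hsub) hm
    _ ≤ mtRisk θ φ := by
        rw [mtRisk_eq_integral θ hφ]
        exact mul_meas_ge_le_integral_of_nonneg
          (ae_of_all _ fun x => add_nonneg (FDP_nonneg θ (φ x)) (FNP_nonneg θ (φ x)))
          (integrable_comp_of_finite hφ fun v => FDP θ v + FNP θ v) m
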